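/- Let p₁ < p₂ be real numbers, P = [p₁, p₂], let L be a continuous linear operator on C(P, ℝ) satisfying Condition VII (there exists a constant K such that for every u ∈ C(P, ℝ) with u(p) > 0 for all p ∈ P, one has (L u)(p) − K·u(p) > 0 for all p ∈ P) and Condition VIII (there exists h ∈ C(P, ℝ) with L h = 0 and h(p) > 0 on P). Let D ∈ C(P, ℝ), d_min = min over p ∈ P of D(p), d_max = max over p ∈ P of D(p). Then there exists a constant C > 0 such that for every point (x₀, t₀) with t₀ > 0, with characteristic triangle Δ₀ = {(x, t) : 0 ≤ t ≤ t₀ and x₀ − d_max·(t₀ − t) ≤ x ≤ x₀ − d_min·(t₀ − t)} and base Γ₀ = [x₀ − d_max·t₀, x₀ − d_min·t₀] × {0}, the following holds: if u : ℝ × [0, t₀] → C(P, ℝ) is continuously differentiable in (x, t), f : ℝ × [0, t₀] × P → ℝ is continuous, u satisfies ∂ₜ u(x, t)(p) + D(p)·∂ₓ u(x, t)(p) = (L (u(x, t)))(p) + f(x, t, p) on Δ₀ with u(x, 0)(p) = u⁰(x, p), then sup over (x, t) ∈ Δ₀ and p ∈ P of |u(x, t)(p)| ≤ C·( sup over (x,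 0) ∈ Γ₀ and p ∈ P of |u⁰(x, p)| + t₀ · sup over (x, t) ∈ Δ₀ and p ∈ P of |f(x, t, p)| ). -/

import Mathlib

/-!
Let `W = (M + F t) h - u` be the gap between `u` and the barrier built from the positive kernel
element `h` of `L`. If `W ≤ 0` somewhere on `Δ₀ × P`, take such a point `(xs, ts, ps)` with `ts`
minimal. Then `W(xs, ts, ·) ≥ 0` vanishes at `ps`, so Condition VII, applied to `W(xs, ts, ·) + δ`
with `δ → 0`, gives `(L W)(ps) ≥ 0`, that is `(L u)(ps) ≤ 0` because `L h = 0`. If `u⁰ < M h` and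
`f < F h`, the equation then makes `W` strictly increasing at `ts` along the characteristic of
speed `D(ps)` through `(xs, ts)`; that characteristic stays in `Δ₀`, where `W > 0` at earlier
times, a contradiction. Letting the bounds tend to the sharp ones and applying this to `±u` with
`M = ‖u⁰‖_Γ / min h` and `F = ‖f‖_Δ / min h` gives the estimate with `C = max h / min h`.
-/

open Set Filter Topology

/-- The characteristic triangle `Δ₀` of the point `(x₀, t₀)` for the transport
operator `∂ₜ + D(p) ∂ₓ`, bounded by the extreme characteristics with speeds
`dmin` and `dmax`. -/
def charTriangle (dmin dmax x₀ t₀ : ℝ) : Set (ℝ × ℝ) :=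
  {q : ℝ × ℝ | 0 ≤ q.2 ∧ q.2 ≤ t₀ ∧
    x₀ - dmax * (t₀ - q.2) ≤ q.1 ∧ q.1 ≤ x₀ - dmin * (t₀ - q.2)}

/-- The base `Γ₀` of the characteristic triangle on the axis `t = 0`. -/
def charBase (dmin dmax x₀ t₀ : ℝ) : Set ℝ :=
  Icc (x₀ - dmax * t₀) (x₀ - dmin * t₀)

theorem le_of_forall_pos_lt_add_mul {a b c : ℝ} (h : ∀ ε > 0, a < b + ε * c) : a ≤ b := by
  have hlim : Tendsto (fun ε => b + ε * c) (𝓝[>] 0) (𝓝 b) := by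
    simpa using ((by fun_prop : Continuous fun ε : ℝ => b + ε * c).tendsto 0).mono_left
      nhdsWithin_le_nhds
  exact ge_of_tendsto hlim (eventually_nhdsWithin_of_forall fun ε hε => (h ε hε).le)

theorem HasDerivWithinAt.nonpos_of_isMinOn_Icc {φ : ℝ → ℝ} {φ' a t : ℝ}
    (hφ : HasDerivWithinAt φ φ' (Icc a t) t) (hmin : IsMinOn φ (Icc a t) t) (hat : a < t) :
    φ' ≤ 0 := by
  have hcone : a - t ∈ posTangentConeAt (Icc a t) t :=
    sub_mem_posTangentConeAt_of_segment_subset (by rw [segment_symm, segment_eq_Icc hat.le])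
  have := hmin.localize.hasFDerivWithinAt_nonneg hφ.hasFDerivWithinAt hcone
  exact nonpos_of_mul_nonneg_right (by simpa using this) (sub_neg.2 hat)

theorem ContinuousWithinAt.nonneg_of_forall_Ico_nonneg {φ : ℝ → ℝ} {a t : ℝ}
    (hφ : ContinuousWithinAt φ (Icc a t) t) (hat : a < t) (hpos : ∀ s ∈ Ico a t, 0 ≤ φ s) :
    0 ≤ φ t := by
  have hlim := hφ.mono Ioo_subset_Icc_self
  rw [ContinuousWithinAt, nhdsWithin_Ioo_eq_nhdsLT hat] at hlim
  refine ge_of_tendsto hlim ?_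
  filter_upwards [Ioo_mem_nhdsLT hat] with s hs using hpos s ⟨hs.1.le, hs.2⟩

theorem IsCompact.le_sSup_image {α : Type*} [TopologicalSpace α] {s : Set α} (hs : IsCompact s)
    {g : α → ℝ} (hg : ContinuousOn g s) {a : α} (ha : a ∈ s) : g a ≤ sSup (g '' s) :=
  le_csSup (hs.bddAbove_image hg) (mem_image_of_mem g ha)

theorem IsCompact.exists_first_nonpos {α : Type*} [TopologicalSpace α] {s : Set α}
    (hs : IsCompact s) (hsc : IsClosed s) {W τ : α → ℝ} (hW : ContinuousOn W s)
    (hτ : ContinuousOn τ s) {z₀ : α} (hz₀ : z₀ ∈ s) (hWz₀ : W z₀ ≤ 0) :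
    ∃ z ∈ s, W z ≤ 0 ∧ ∀ z' ∈ s, τ z' < τ z → 0 < W z' := by
  obtain ⟨z, ⟨hz, hWz⟩, hmin⟩ := (hs.of_isClosed_subset
    (hW.preimage_isClosed_of_isClosed hsc isClosed_Iic) inter_subset_left).exists_isMinOn
      ⟨z₀, hz₀, hWz₀⟩ (hτ.mono inter_subset_left)
  exact ⟨z, hz, hWz, fun z' hz' hlt => not_le.1 fun hle => not_lt.2 (hmin ⟨hz', hle⟩) hlt⟩

theorem hasDerivWithinAt_partial_increment {g gt : ℝ → ℝ → ℝ} {y : ℝ → ℝ} {a t x : ℝ}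
    (hg : ∀ z, ∀ s ∈ Icc a t, HasDerivWithinAt (g z) (gt z s) (Icc a t) s)
    (hgt : ContinuousWithinAt (fun q : ℝ × ℝ => gt q.1 q.2) (univ ×ˢ Icc a t) (x, t))
    (hy : Tendsto y (𝓝 t) (𝓝 x)) :
    HasDerivWithinAt (fun s => g (y s) s - g (y s) t) (gt x t) (Icc a t) t := by
  rw [hasDerivWithinAt_iff_tendsto_slope, Metric.tendsto_nhdsWithin_nhds]
  intro ε hε
  obtain ⟨δ, hδ, hgtδ⟩ := Metric.continuousWithinAt_iff.1 hgt ε hε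
  obtain ⟨δ', hδ', hyδ⟩ := Metric.tendsto_nhds_nhds.1 hy δ hδ
  refine ⟨min δ δ', lt_min hδ hδ', fun {s} hs hsd => ?_⟩
  obtain ⟨⟨has, hst⟩, hne⟩ := hs
  have hst : s < t := lt_of_le_of_ne hst hne
  have hsub : Icc s t ⊆ Icc a t := Icc_subset_Icc_left has
  obtain ⟨θ, hθ, hslope⟩ := exists_hasDerivAt_eq_slope (g (y s)) (gt (y s)) hst
    (fun r hr => (hg _ r (hsub hr)).continuousWithinAt.mono hsub)
    (fun r hr => (hg _ r (hsub (Ioo_subset_Icc_self hr))).hasDerivAt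
      (Icc_mem_nhds (has.trans_lt hr.1) hr.2))
  have hslope' : slope (fun s => g (y s) s - g (y s) t) t s = gt (y s) θ := by
    rw [slope_def_field, hslope, sub_self, sub_zero, ← neg_sub t s, div_neg, ← neg_div, neg_sub]
  rw [hslope']
  refine hgtδ (show (y s, θ) ∈ univ ×ˢ Icc a t from ⟨mem_univ _, has.trans hθ.1.le, hθ.2.le⟩) ?_
  have hsd' := lt_min_iff.1 hsd
  refine max_lt (hyδ hsd'.2) ?_
  change dist θ t < δ
  rw [Real.dist_eq, abs_sub_lt_iff] at hsd' ⊢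
  constructor <;> linarith [hθ.1, hθ.2, hsd'.1]

theorem hasDerivWithinAt_along_line {g gt : ℝ → ℝ → ℝ} {gx a t x : ℝ} (c : ℝ)
    (hg : ∀ z, ∀ s ∈ Icc a t, HasDerivWithinAt (g z) (gt z s) (Icc a t) s)
    (hgt : ContinuousWithinAt (fun q : ℝ × ℝ => gt q.1 q.2) (univ ×ˢ Icc a t) (x, t))
    (hgx : HasDerivAt (g · t) gx x) :
    HasDerivWithinAt (fun s => g (x - c * (t - s)) s) (gt x t + c * gx) (Icc a t) t := by
  have hline : HasDerivAt (fun s => x - c * (t - s)) c t := by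
    simpa using (((hasDerivAt_id t).const_sub t).const_mul c).const_sub x
  -- the spatial increment is taken at the fixed time `t`, so it is a plain chain rule
  have hspace : HasDerivAt (fun s => g (x - c * (t - s)) t) (gx * c) t :=
    hgx.comp_of_eq t hline (by ring)
  have htime := hasDerivWithinAt_partial_increment hg hgt
    (y := fun s => x - c * (t - s)) (by simpa using hline.continuousAt.tendsto)
  simpa only [Pi.add_def, sub_add_cancel, mul_comm c] using htime.add hspace.hasDerivWithinAt

section CharTriangle

variable {dmin dmax x₀ t₀ : ℝ}

theorem isClosed_charTriangle : IsClosed (charTriangle dmin dmax x₀ t₀) := by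
  simp only [charTriangle, ofPred_and]
  apply_rules [IsClosed.inter, isClosed_le] <;> fun_prop

theorem charTriangle_subset_Icc_prod_Icc :
    charTriangle dmin dmax x₀ t₀ ⊆
      Icc (x₀ - |dmax| * t₀) (x₀ + |dmin| * t₀) ×ˢ Icc 0 t₀ := by
  rintro ⟨x, t⟩ ⟨ht0, ht, hlo, hhi⟩
  refine ⟨⟨?_, ?_⟩, ht0, ht⟩
  · nlinarith [mul_nonneg (sub_nonneg.2 (le_abs_self dmax)) (sub_nonneg.2 ht),
      mul_nonneg (abs_nonneg dmax) ht0]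
  · nlinarith [mul_nonneg (sub_nonneg.2 (neg_abs_le dmin)) (sub_nonneg.2 ht),
      mul_nonneg (abs_nonneg dmin) ht0]

theorem isCompact_charTriangle : IsCompact (charTriangle dmin dmax x₀ t₀) :=
  (isCompact_Icc.prod isCompact_Icc).of_isClosed_subset isClosed_charTriangle
    charTriangle_subset_Icc_prod_Icc

theorem mem_charBase_of_mk_zero_mem {x : ℝ} (hx : (x, 0) ∈ charTriangle dmin dmax x₀ t₀) :
    x ∈ charBase dmin dmax x₀ t₀ :=
  ⟨by simpa using hx.2.2.1, by simpa using hx.2.2.2⟩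

theorem mk_sub_mul_mem_charTriangle {x t c s : ℝ} (hq : (x, t) ∈ charTriangle dmin dmax x₀ t₀)
    (hc : c ∈ Icc dmin dmax) (hs : s ∈ Icc 0 t) :
    (x - c * (t - s), s) ∈ charTriangle dmin dmax x₀ t₀ := by
  obtain ⟨-, ht, hlo, hhi⟩ := hq
  refine ⟨hs.1, hs.2.trans ht, ?_, ?_⟩ <;> dsimp only at * <;>
    nlinarith [mul_le_mul_of_nonneg_right hc.1 (sub_nonneg.2 hs.2),
      mul_le_mul_of_nonneg_right hc.2 (sub_nonneg.2 hs.2)]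

end CharTriangle

section ContinuousMap

variable {X : Type*} [TopologicalSpace X]

theorem ContinuousOn.uncurry_apply [LocallyCompactSpace X] {Y : Type*} [TopologicalSpace Y]
    {F : Y → C(X, ℝ)} {s : Set Y} (hF : ContinuousOn F s) :
    ContinuousOn (fun z : Y × X => F z.1 z.2) (s ×ˢ univ) :=
  continuous_eval.comp_continuousOn
    ((hF.comp continuousOn_fst fun _ hz => hz.1).prodMk continuousOn_snd)

theorem apply_nonneg_of_nonneg_of_eq_zero {L : C(X, ℝ) →L[ℝ] C(X, ℝ)} {K : ℝ}
    (hL : ∀ u : C(X, ℝ), (∀ p, 0 < u p) → ∀ p, 0 < L u p - K * u p)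
    {v : C(X, ℝ)} (hv : ∀ p, 0 ≤ v p) {p₀ : X} (hv₀ : v p₀ = 0) : 0 ≤ L v p₀ := by
  refine le_of_forall_pos_lt_add_mul (c := L 1 p₀ - K) fun δ hδ => ?_
  have := hL (v + δ • 1) (fun p => by simpa using add_pos_of_nonneg_of_pos (hv p) hδ) p₀
  simp only [map_add, map_smul, ContinuousMap.add_apply, ContinuousMap.smul_apply,
    ContinuousMap.one_apply, smul_eq_mul, hv₀] at this
  linarith

theorem exists_pos_lower_upper_bound [CompactSpace X] {h : C(X, ℝ)} (hh : ∀ p, 0 < h p) :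
    ∃ m H : ℝ, 0 < m ∧ 0 < H ∧ ∀ p, m ≤ h p ∧ h p ≤ H := by
  obtain ⟨m, hm, hmh⟩ := isCompact_univ.exists_forall_le' h.continuous.continuousOn
    fun p _ => hh p
  -- a lower bound `m' > 0` of `1 / h` gives the bound `1 / m'` of `h`, positive even for empty `X`
  obtain ⟨m', hm', hm'h⟩ := isCompact_univ.exists_forall_le'
    (h.continuous.inv₀ fun p => (hh p).ne').continuousOn fun p _ => inv_pos.2 (hh p)
  exact ⟨m, m'⁻¹, hm, inv_pos.2 hm', fun p =>
    ⟨hmh p trivial, (le_inv_comm₀ hm' (hh p)).1 (hm'h p trivial)⟩⟩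

structure HasPartialDerivsOnStrip [CompactSpace X] (u ut ux : ℝ → ℝ → C(X, ℝ)) (T : ℝ) : Prop where
  continuousOn : ContinuousOn (fun q : ℝ × ℝ => u q.1 q.2) (univ ×ˢ Icc 0 T)
  hasDerivWithinAt_time : ∀ x, ∀ t ∈ Icc 0 T, HasDerivWithinAt (u x) (ut x t) (Icc 0 T) t
  hasDerivAt_space : ∀ x, ∀ t ∈ Icc 0 T, HasDerivAt (fun y => u y t) (ux x t) x
  continuousOn_time_deriv : ContinuousOn (fun q : ℝ × ℝ => ut q.1 q.2) (univ ×ˢ Icc 0 T)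

namespace HasPartialDerivsOnStrip

variable [CompactSpace X] {u ut ux : ℝ → ℝ → C(X, ℝ)} {T : ℝ}

theorem neg (hu : HasPartialDerivsOnStrip u ut ux T) :
    HasPartialDerivsOnStrip (fun x t => -u x t) (fun x t => -ut x t) (fun x t => -ux x t) T where
  continuousOn := hu.continuousOn.neg
  hasDerivWithinAt_time x t ht := (hu.hasDerivWithinAt_time x t ht).neg
  hasDerivAt_space x t ht := (hu.hasDerivAt_space x t ht).neg
  continuousOn_time_deriv := hu.continuousOn_time_deriv.neg

theorem hasDerivWithinAt_characteristic (hu : HasPartialDerivsOnStrip u ut ux T) (p : X) (c : ℝ)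
    {x t : ℝ} (ht : t ∈ Icc 0 T) :
    HasDerivWithinAt (fun s => u (x - c * (t - s)) s p) (ut x t p + c * ux x t p) (Icc 0 t) t := by
  have hsub : Icc 0 t ⊆ Icc 0 T := Icc_subset_Icc_right ht.2
  refine hasDerivWithinAt_along_line (g := fun y s => u y s p) (gt := fun y s => ut y s p) c
    (fun y s hs => ?_) ?_ ?_
  · exact (ContinuousMap.evalCLM ℝ p).hasFDerivAt.comp_hasDerivWithinAt s
      ((hu.hasDerivWithinAt_time y s (hsub hs)).mono hsub)
  · exact ((continuous_eval_const p).comp_continuousOn hu.continuousOn_time_deriv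
      (x, t) ⟨mem_univ _, ht⟩).mono (prod_mono subset_rfl hsub)
  · exact (ContinuousMap.evalCLM ℝ p).hasFDerivAt.comp_hasDerivAt x (hu.hasDerivAt_space x t ht)

end HasPartialDerivsOnStrip

variable [CompactSpace X] [T2Space X] {L : C(X, ℝ) →L[ℝ] C(X, ℝ)} {K : ℝ} {h D : C(X, ℝ)}
  {dmin dmax x₀ t₀ : ℝ} {u ut ux : ℝ → ℝ → C(X, ℝ)} {f : ℝ → ℝ → X → ℝ}

theorem lt_barrier_of_transport
    (hL : ∀ u : C(X, ℝ), (∀ p, 0 < u p) → ∀ p, 0 < L u p - K * u p)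
    (hLh : L h = 0) (hD : ∀ p, D p ∈ Icc dmin dmax) (hu : HasPartialDerivsOnStrip u ut ux t₀)
    (hpde : ∀ q ∈ charTriangle dmin dmax x₀ t₀, ∀ p,
      ut q.1 q.2 p + D p * ux q.1 q.2 p = L (u q.1 q.2) p + f q.1 q.2 p)
    {M F : ℝ} (hinit : ∀ x ∈ charBase dmin dmax x₀ t₀, ∀ p, u x 0 p < M * h p)
    (hf : ∀ q ∈ charTriangle dmin dmax x₀ t₀, ∀ p, f q.1 q.2 p < F * h p) :
    ∀ q ∈ charTriangle dmin dmax x₀ t₀, ∀ p, u q.1 q.2 p < (M + F * q.2) * h p := by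
  set Δ := charTriangle dmin dmax x₀ t₀
  set W : (ℝ × ℝ) × X → ℝ := fun z => (M + F * z.1.2) * h z.2 - u z.1.1 z.1.2 z.2
  have hΔ : Δ ⊆ univ ×ˢ Icc 0 t₀ := fun q hq => ⟨mem_univ _, hq.1, hq.2.1⟩
  have hW : ContinuousOn W (Δ ×ˢ univ) :=
    (Continuous.continuousOn (by fun_prop)).sub (hu.continuousOn.mono hΔ).uncurry_apply
  by_contra! hviol
  obtain ⟨q, hq, p, hqp⟩ := hviol
  obtain ⟨⟨⟨xs, ts⟩, ps⟩, ⟨hsΔ, -⟩, hWs, hearlier⟩ :=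
    (isCompact_charTriangle.prod isCompact_univ).exists_first_nonpos
      (isClosed_charTriangle.prod isClosed_univ) hW
      (continuous_snd.comp continuous_fst).continuousOn (z₀ := (q, p)) ⟨hq, mem_univ p⟩
      (sub_nonpos.2 hqp)
  have hts : 0 < ts := by
    refine hsΔ.1.lt_of_ne' fun hts => ?_
    subst hts
    have := hinit xs (mem_charBase_of_mk_zero_mem hsΔ) ps
    simp only [W, mul_zero, add_zero] at hWs
    linarith
  -- the backward characteristic of speed `D p` from `(xs, ts)` stays in `Δ`
  set φ : X → ℝ → ℝ := fun p s => W ((xs - D p * (ts - s), s), p)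
  have hφ_ts : ∀ p, φ p ts = W ((xs, ts), p) := fun p => by simp [φ]
  have hφ_pos : ∀ p, ∀ s ∈ Ico 0 ts, 0 < φ p s := fun p s hs =>
    hearlier _ ⟨mk_sub_mul_mem_charTriangle hsΔ (hD p) (Ico_subset_Icc_self hs), mem_univ _⟩ hs.2
  have hgap : ∀ p, 0 ≤ W ((xs, ts), p) := fun p => by
    rw [← hφ_ts]
    refine ContinuousWithinAt.nonneg_of_forall_Ico_nonneg ?_ hts fun s hs => (hφ_pos p s hs).le
    exact (hW.comp (Continuous.continuousOn (by fun_prop)) fun s hs =>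
      ⟨mk_sub_mul_mem_charTriangle hsΔ (hD p) hs, mem_univ _⟩) ts ⟨hts.le, le_rfl⟩
  have hLu : L (u xs ts) ps ≤ 0 := by
    have := apply_nonneg_of_nonneg_of_eq_zero hL (v := (M + F * ts) • h - u xs ts)
      (fun p => by simpa [W] using hgap p) (by simpa [W] using le_antisymm hWs (hgap ps))
    simpa [hLh] using this
  have hderiv : HasDerivWithinAt (φ ps) (F * h ps - (ut xs ts ps + D ps * ux xs ts ps))
      (Icc 0 ts) ts := by
    have := (((hasDerivAt_id ts).const_mul F).const_add M).mul_const (h ps)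
    show HasDerivWithinAt (fun s => (M + F * s) * h ps - u (xs - D ps * (ts - s)) s ps) _ _ _
    simpa only [Pi.sub_def, id, mul_one] using this.hasDerivWithinAt.sub
      (hu.hasDerivWithinAt_characteristic ps (D ps) ⟨hts.le, hsΔ.2.1⟩)
  have hmin : IsMinOn (φ ps) (Icc 0 ts) ts := isMinOn_iff.2 fun s hs => by
    rcases hs.2.eq_or_lt with rfl | hlt
    · exact le_rfl
    · rw [hφ_ts]
      exact hWs.trans (hφ_pos ps s ⟨hs.1, hlt⟩).le
  have := hderiv.nonpos_of_isMinOn_Icc hmin hts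
  linarith [hpde (xs, ts) hsΔ ps, hf (xs, ts) hsΔ ps]

theorem le_barrier_of_transport
    (hL : ∀ u : C(X, ℝ), (∀ p, 0 < u p) → ∀ p, 0 < L u p - K * u p)
    (hLh : L h = 0) (hh : ∀ p, 0 < h p) (hD : ∀ p, D p ∈ Icc dmin dmax)
    (hu : HasPartialDerivsOnStrip u ut ux t₀)
    (hpde : ∀ q ∈ charTriangle dmin dmax x₀ t₀, ∀ p,
      ut q.1 q.2 p + D p * ux q.1 q.2 p = L (u q.1 q.2) p + f q.1 q.2 p)
    {M F : ℝ} (hinit : ∀ x ∈ charBase dmin dmax x₀ t₀, ∀ p, u x 0 p ≤ M * h p)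
    (hf : ∀ q ∈ charTriangle dmin dmax x₀ t₀, ∀ p, f q.1 q.2 p ≤ F * h p) :
    ∀ q ∈ charTriangle dmin dmax x₀ t₀, ∀ p, u q.1 q.2 p ≤ (M + F * q.2) * h p := by
  intro q hq p
  refine le_of_forall_pos_lt_add_mul (c := (1 + q.2) * h p) fun ε hε => ?_
  have := lt_barrier_of_transport hL hLh hD hu hpde (M := M + ε) (F := F + ε)
    (fun x hx p => (hinit x hx p).trans_lt (by nlinarith [hh p]))
    (fun q hq p => (hf q hq p).trans_lt (by nlinarith [hh p])) q hq p
  linarith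

theorem abs_le_barrier_of_transport
    (hL : ∀ u : C(X, ℝ), (∀ p, 0 < u p) → ∀ p, 0 < L u p - K * u p)
    (hLh : L h = 0) (hh : ∀ p, 0 < h p) (hD : ∀ p, D p ∈ Icc dmin dmax)
    (hu : HasPartialDerivsOnStrip u ut ux t₀)
    (hpde : ∀ q ∈ charTriangle dmin dmax x₀ t₀, ∀ p,
      ut q.1 q.2 p + D p * ux q.1 q.2 p = L (u q.1 q.2) p + f q.1 q.2 p)
    {M F : ℝ} (hinit : ∀ x ∈ charBase dmin dmax x₀ t₀, ∀ p, |u x 0 p| ≤ M * h p)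
    (hf : ∀ q ∈ charTriangle dmin dmax x₀ t₀, ∀ p, |f q.1 q.2 p| ≤ F * h p) :
    ∀ q ∈ charTriangle dmin dmax x₀ t₀, ∀ p, |u q.1 q.2 p| ≤ (M + F * q.2) * h p := by
  intro q hq p
  have hpos := le_barrier_of_transport hL hLh hh hD hu hpde
    (fun x hx p => (le_abs_self _).trans (hinit x hx p))
    (fun q hq p => (le_abs_self _).trans (hf q hq p)) q hq p
  have hneg := le_barrier_of_transport hL hLh hh hD hu.neg (f := fun x t p => -f x t p)
    (fun q hq p => by simp only [ContinuousMap.neg_apply, map_neg]; linarith [hpde q hq p])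
    (fun x hx p => (neg_le_abs _).trans (hinit x hx p))
    (fun q hq p => (neg_le_abs _).trans (hf q hq p)) q hq p
  simp only [ContinuousMap.neg_apply] at hneg
  exact abs_le.2 ⟨by linarith, hpos⟩

end ContinuousMap

theorem lemma4_apriori_estimate_general (p₁ p₂ : ℝ)
    (L : C(Icc p₁ p₂, ℝ) →L[ℝ] C(Icc p₁ p₂, ℝ))
    (K : ℝ)
    (hVII : ∀ u : C(Icc p₁ p₂, ℝ), (∀ p, 0 < u p) → ∀ p, 0 < L u p - K * u p)
    (h : C(Icc p₁ p₂, ℝ)) (hLh : L h = 0) (hh : ∀ p, 0 < h p)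
    (D : C(Icc p₁ p₂, ℝ)) (dmin dmax : ℝ)
    (hdmin : IsLeast (range fun p => D p) dmin)
    (hdmax : IsGreatest (range fun p => D p) dmax) :
    ∃ C : ℝ, 0 < C ∧
      ∀ (x₀ t₀ : ℝ), 0 < t₀ →
      ∀ (u ut ux : ℝ → ℝ → C(Icc p₁ p₂, ℝ))
        (u0 : ℝ → Icc p₁ p₂ → ℝ)
        (f : ℝ → ℝ → Icc p₁ p₂ → ℝ),
      -- `u` is continuously differentiable in `(x, t)` on `ℝ × [0, t₀]`
      ContinuousOn (fun q : ℝ × ℝ => u q.1 q.2) (univ ×ˢ Icc 0 t₀) →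
      (∀ x : ℝ, ∀ t ∈ Icc (0:ℝ) t₀,
        HasDerivWithinAt (fun s => u x s) (ut x t) (Icc 0 t₀) t) →
      (∀ x : ℝ, ∀ t ∈ Icc (0:ℝ) t₀, HasDerivAt (fun y => u y t) (ux x t) x) →
      ContinuousOn (fun q : ℝ × ℝ => ut q.1 q.2) (univ ×ˢ Icc 0 t₀) →
      ContinuousOn (fun q : ℝ × ℝ => ux q.1 q.2) (univ ×ˢ Icc 0 t₀) →
      -- `f` is continuous
      ContinuousOn (fun q : ℝ × ℝ × Icc p₁ p₂ => f q.1 q.2.1 q.2.2)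
        (univ ×ˢ Icc 0 t₀ ×ˢ univ) →
      -- the transport equation holds on `Δ₀`
      (∀ q ∈ charTriangle dmin dmax x₀ t₀, ∀ p,
        ut q.1 q.2 p + D p * ux q.1 q.2 p = L (u q.1 q.2) p + f q.1 q.2 p) →
      -- initial condition
      (∀ x : ℝ, ∀ p, u x 0 p = u0 x p) →
      -- the a priori sup-norm estimate `‖u‖_Δ ≤ C (‖u⁰‖_Γ + t₀ ‖f‖_Δ)`
      ∀ q ∈ charTriangle dmin dmax x₀ t₀, ∀ p,
        |u q.1 q.2 p| ≤
          C * (sSup ((fun r : ℝ × Icc p₁ p₂ => |u0 r.1 r.2|) ''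
                  (charBase dmin dmax x₀ t₀ ×ˢ univ)) +
               t₀ * sSup ((fun r : (ℝ × ℝ) × Icc p₁ p₂ => |f r.1.1 r.1.2 r.2|) ''
                  (charTriangle dmin dmax x₀ t₀ ×ˢ univ))) := by
  obtain ⟨m, H, hm, hH, hmH⟩ := exists_pos_lower_upper_bound hh
  refine ⟨H / m, div_pos hH hm,
    fun x₀ t₀ ht₀ u ut ux u0 f hu hut hux hutc _ hfc hpde hinit q hq p => ?_⟩
  obtain rfl : u0 = fun x p => u x 0 p := funext₂ fun x p => (hinit x p).symm
  set M := sSup ((fun r : ℝ × Icc p₁ p₂ => |u r.1 0 r.2|) '' (charBase dmin dmax x₀ t₀ ×ˢ univ))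
  set F := sSup ((fun r : (ℝ × ℝ) × Icc p₁ p₂ => |f r.1.1 r.1.2 r.2|) ''
    (charTriangle dmin dmax x₀ t₀ ×ˢ univ))
  have hM : 0 ≤ M := Real.sSup_nonneg (by rintro _ ⟨r, -, rfl⟩; exact abs_nonneg _)
  have hF : 0 ≤ F := Real.sSup_nonneg (by rintro _ ⟨r, -, rfl⟩; exact abs_nonneg _)
  have hscale : ∀ a, 0 ≤ a → ∀ p, a ≤ a / m * h p := fun a ha p => by
    rw [div_mul_eq_mul_div, le_div_iff₀ hm]
    exact mul_le_mul_of_nonneg_left (hmH p).1 ha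
  have hΓ : IsCompact (charBase dmin dmax x₀ t₀ ×ˢ (univ : Set (Icc p₁ p₂))) :=
    isCompact_Icc.prod isCompact_univ
  have hu0 : ∀ x ∈ charBase dmin dmax x₀ t₀, ∀ p, |u x 0 p| ≤ M / m * h p := fun x hx p =>
    (hΓ.le_sSup_image
      (hu.comp (Continuous.continuousOn (by fun_prop : Continuous fun x : ℝ => (x, (0 : ℝ))))
        fun _ _ => ⟨mem_univ _, left_mem_Icc.2 ht₀.le⟩).uncurry_apply.abs
      (a := (x, p)) ⟨hx, mem_univ p⟩).trans (hscale M hM p)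
  have hf : ∀ q ∈ charTriangle dmin dmax x₀ t₀, ∀ p, |f q.1 q.2 p| ≤ F / m * h p :=
    fun q hq p => ((isCompact_charTriangle.prod isCompact_univ).le_sSup_image
      (hfc.comp (Continuous.continuousOn
        (by fun_prop : Continuous fun r : (ℝ × ℝ) × Icc p₁ p₂ => (r.1.1, r.1.2, r.2)))
        fun r hr => ⟨mem_univ _, ⟨hr.1.1, hr.1.2.1⟩, mem_univ _⟩).abs
      (a := (q, p)) ⟨hq, mem_univ p⟩).trans (hscale F hF p)
  calc |u q.1 q.2 p|
      ≤ (M / m + F / m * q.2) * h p :=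
        abs_le_barrier_of_transport hVII hLh hh (fun p => ⟨hdmin.2 ⟨p, rfl⟩, hdmax.2 ⟨p, rfl⟩⟩)
          ⟨hu, hut, hux, hutc⟩ hpde hu0 hf q hq p
    _ ≤ (M / m + F / m * t₀) * H := by gcongr; exacts [(hh p).le, hq.2.1, (hmH p).2]
    _ = H / m * (M + t₀ * F) := by field_simp

/-- **Lemma 4 (a priori estimate).**  Let `L` satisfy Conditions VII and VIII.
Then there is a constant `C > 0`, independent of the point `(x₀, t₀)`, such
that every continuously differentiable solution `u` of
`uₜ + D(p) uₓ = L u + f` on the characteristic triangle `Δ₀` of `(x₀, t₀)`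
with initial data `u⁰` satisfies
`‖u‖_Δ ≤ C (‖u⁰‖_Γ + t₀ ‖f‖_Δ)` in the uniform norm. -/
theorem lemma4_apriori_estimate (p₁ p₂ : ℝ) (hp : p₁ < p₂)
    (L : C(Icc p₁ p₂, ℝ) →L[ℝ] C(Icc p₁ p₂, ℝ))
    (K : ℝ)
    (hVII : ∀ u : C(Icc p₁ p₂, ℝ), (∀ p, 0 < u p) → ∀ p, 0 < L u p - K * u p)
    (h : C(Icc p₁ p₂, ℝ)) (hLh : L h = 0) (hh : ∀ p, 0 < h p)
    (D : C(Icc p₁ p₂, ℝ)) (dmin dmax : ℝ)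
    (hdmin : IsLeast (range fun p => D p) dmin)
    (hdmax : IsGreatest (range fun p => D p) dmax) :
    ∃ C : ℝ, 0 < C ∧
      ∀ (x₀ t₀ : ℝ), 0 < t₀ →
      ∀ (u ut ux : ℝ → ℝ → C(Icc p₁ p₂, ℝ))
        (u0 : ℝ → Icc p₁ p₂ → ℝ)
        (f : ℝ → ℝ → Icc p₁ p₂ → ℝ),
      -- `u` is continuously differentiable in `(x, t)` on `ℝ × [0, t₀]`
      ContinuousOn (fun q : ℝ × ℝ => u q.1 q.2) (univ ×ˢ Icc 0 t₀) →
      (∀ x : ℝ, ∀ t ∈ Icc (0:ℝ) t₀,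
        HasDerivWithinAt (fun s => u x s) (ut x t) (Icc 0 t₀) t) →
      (∀ x : ℝ, ∀ t ∈ Icc (0:ℝ) t₀, HasDerivAt (fun y => u y t) (ux x t) x) →
      ContinuousOn (fun q : ℝ × ℝ => ut q.1 q.2) (univ ×ˢ Icc 0 t₀) →
      ContinuousOn (fun q : ℝ × ℝ => ux q.1 q.2) (univ ×ˢ Icc 0 t₀) →
      -- `f` is continuous
      ContinuousOn (fun q : ℝ × ℝ × Icc p₁ p₂ => f q.1 q.2.1 q.2.2)
        (univ ×ˢ Icc 0 t₀ ×ˢ univ) →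
      -- the transport equation holds on `Δ₀`
      (∀ q ∈ charTriangle dmin dmax x₀ t₀, ∀ p,
        ut q.1 q.2 p + D p * ux q.1 q.2 p = L (u q.1 q.2) p + f q.1 q.2 p) →
      -- initial condition
      (∀ x : ℝ, ∀ p, u x 0 p = u0 x p) →
      -- the a priori sup-norm estimate `‖u‖_Δ ≤ C (‖u⁰‖_Γ + t₀ ‖f‖_Δ)`
      ∀ q ∈ charTriangle dmin dmax x₀ t₀, ∀ p,
        |u q.1 q.2 p| ≤
          C * (sSup ((fun r : ℝ × Icc p₁ p₂ => |u0 r.1 r.2|) ''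
                  (charBase dmin dmax x₀ t₀ ×ˢ univ)) +
               t₀ * sSup ((fun r : (ℝ × ℝ) × Icc p₁ p₂ => |f r.1.1 r.1.2 r.2|) ''
                  (charTriangle dmin dmax x₀ t₀ ×ˢ univ))) :=
  lemma4_apriori_estimate_general p₁ p₂ L K hVII h hLh hh D dmin dmax hdmin hdmax
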